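/- arXiv:math/9911055 — 3 statements merged into one kernel-verified Lean document; each statement's English description precedes it below -/
import Mathlib

section
/- Let A be an n×n complex matrix with no eigenvalues on the imaginary axis. A solution u of the ODE u'(t) = A u(t) on the half-line [0,∞) is bounded if and only if its initial value u(0) lies in the sum of the generalized eigenspaces of A corresponding to eigenvalues with negative real part. -/
/-!
On a generalized eigenvector `x` for `μ` the flow is a finite sum,
`exp (t • F) x = e^{tμ} ∑_{k < m} t^k / k! • (F - μ)^k x`, so it tends to `0` when `re μ < 0`.
When no eigenvalue lies on the imaginary axis, the space splits as `S ⊔ U` with `S` (resp. `U`)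
the sum of the generalized eigenspaces with `re μ < 0` (resp. `re μ > 0`). The subspace `U` is invariant
under the flow and is the stable subspace of `-F`; being finite-dimensional, the backward flow
restricted to it tends to `0` in operator norm. Hence if `exp (t • F) (s + w)` is bounded with
`s ∈ S`, `w ∈ U`, then `exp (t • F) w` is bounded and `w = exp (-t • F) (exp (t • F) w) → 0`.
-/

open NormedSpace Filter Topology Set

theorem tendsto_cexp_mul_mul_pow_atTop {μ : ℂ} (hμ : μ.re < 0) (k : ℕ) :
    Tendsto (fun t : ℝ => Complex.exp (t * μ) * (t : ℂ) ^ k) atTop (𝓝 0) := by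
  rw [tendsto_zero_iff_norm_tendsto_zero]
  have h := ((Real.tendsto_pow_mul_exp_neg_atTop_nhds_zero k).comp
    (tendsto_id.const_mul_atTop (neg_pos.mpr hμ))).const_mul ((-μ.re)⁻¹ ^ k)
  rw [mul_zero] at h
  refine h.congr' ?_
  filter_upwards [eventually_ge_atTop 0] with t ht
  have hcancel : (-μ.re)⁻¹ * (-μ.re * t) = t := by field_simp [hμ.ne]
  simp only [Function.comp_apply, id, norm_mul, Complex.norm_exp, norm_pow, Complex.norm_real,
    Real.norm_of_nonneg ht, Complex.mul_re, Complex.ofReal_re, Complex.ofReal_im, zero_mul,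
    sub_zero]
  rw [← mul_assoc, ← mul_pow, hcancel, neg_mul, neg_neg, mul_comm, mul_comm μ.re]

theorem ContinuousLinearMap.tendsto_nhds_zero_of_tendsto_apply {𝕜 E F ι : Type*}
    [NontriviallyNormedField 𝕜] [CompleteSpace 𝕜] [NormedAddCommGroup E] [NormedSpace 𝕜 E]
    [FiniteDimensional 𝕜 E] [NormedAddCommGroup F] [NormedSpace 𝕜 F]
    {l : Filter ι} {G : ι → E →L[𝕜] F} (h : ∀ x, Tendsto (fun i => G i x) l (𝓝 0)) :
    Tendsto G l (𝓝 0) := by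
  let b := Module.finBasis 𝕜 E
  obtain ⟨C, -, hC⟩ := b.exists_opNorm_le (F := F)
  rw [tendsto_zero_iff_norm_tendsto_zero]
  have hsum : Tendsto (fun i => C * ∑ j, ‖G i (b j)‖) l (𝓝 0) := by
    simpa using (tendsto_finsetSum _ fun j _ => (h (b j)).norm).const_mul C
  refine squeeze_zero (fun _ => norm_nonneg _) (fun i => hC (by positivity) fun j => ?_) hsum
  exact Finset.single_le_sum (f := fun j => ‖G i (b j)‖) (fun _ _ => norm_nonneg _)
    (Finset.mem_univ j)

theorem exists_forall_norm_le_of_tendsto {E : Type*} [SeminormedAddCommGroup E] {f : ℝ → E}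
    (hf : Continuous f) {a : E} (h : Tendsto f atTop (𝓝 a)) :
    ∃ C : ℝ, ∀ t : ℝ, 0 ≤ t → ‖f t‖ ≤ C := by
  obtain ⟨T, hT⟩ := eventually_atTop.mp (h.norm.eventually (eventually_le_nhds (lt_add_one ‖a‖)))
  obtain ⟨C, hC⟩ := (isCompact_Icc (a := 0) (b := T)).exists_bound_of_continuousOn hf.continuousOn
  refine ⟨max C (‖a‖ + 1), fun t ht => ?_⟩
  rcases le_total t T with htT | hTt
  · exact le_max_of_le_left (hC t ⟨ht, htT⟩)
  · exact le_max_of_le_right (hT t hTt)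

namespace Module.End

theorem maxGenEigenspace_neg {R M : Type*} [CommRing R] [AddCommGroup M] [Module R M]
    (f : End R M) (μ : R) : (-f).maxGenEigenspace (-μ) = f.maxGenEigenspace μ := by
  ext x
  have hneg : -f - (-μ) • (1 : End R M) = -(f - μ • 1) := by rw [neg_smul]; abel
  simp only [mem_maxGenEigenspace, hneg, neg_pow (f - μ • 1), mul_apply]
  refine exists_congr fun k => ?_
  rcases neg_one_pow_eq_or (End R M) k with h | h <;> simp [h]

variable {V : Type*} [AddCommGroup V] [Module ℂ V]

def stableSubspace (f : End ℂ V) : Submodule ℂ V :=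
  ⨆ (μ : ℂ) (_ : μ.re < 0), f.maxGenEigenspace μ

def unstableSubspace (f : End ℂ V) : Submodule ℂ V :=
  ⨆ (μ : ℂ) (_ : 0 < μ.re), f.maxGenEigenspace μ

theorem stableSubspace_neg (f : End ℂ V) : (-f).stableSubspace = f.unstableSubspace := by
  refine le_antisymm (iSup₂_le fun μ hμ => ?_) (iSup₂_le fun μ hμ => ?_)
  · rw [← neg_neg μ, maxGenEigenspace_neg]
    exact le_iSup₂_of_le (-μ) (by simpa using hμ) le_rfl
  · rw [← maxGenEigenspace_neg]
    exact le_iSup₂_of_le (-μ) (by simpa using hμ) le_rfl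

theorem unstableSubspace_le_comap_of_commute {f g : End ℂ V} (h : Commute f g) :
    f.unstableSubspace ≤ f.unstableSubspace.comap g :=
  iSup₂_le fun μ hμ _ hx =>
    Submodule.mem_iSup_of_mem μ <| Submodule.mem_iSup_of_mem hμ <|
      mapsTo_maxGenEigenspace_of_comm h μ hx

theorem stableSubspace_sup_unstableSubspace [FiniteDimensional ℂ V] {f : End ℂ V}
    (h : ∀ μ, f.HasEigenvalue μ → μ.re ≠ 0) : f.stableSubspace ⊔ f.unstableSubspace = ⊤ := by
  rw [eq_top_iff, ← iSup_maxGenEigenspace_eq_top f]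
  refine iSup_le fun μ => ?_
  rcases lt_trichotomy μ.re 0 with hneg | hzero | hpos
  · exact le_sup_of_le_left (le_iSup₂_of_le μ hneg le_rfl)
  · have : ¬f.HasUnifEigenvalue μ ⊤ := fun hμ =>
      h μ ((hasUnifEigenvalue_iff_hasUnifEigenvalue_one (by simp)).mp hμ) hzero
    rw [HasUnifEigenvalue, not_not] at this
    exact this.le.trans bot_le
  · exact le_sup_of_le_right (le_iSup₂_of_le μ hpos le_rfl)

end Module.End

section Flow

open Module.End

variable {V : Type*} [NormedAddCommGroup V] [NormedSpace ℂ V] [CompleteSpace V]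

theorem exp_smul_apply_eq_sum_of_pow_apply_eq_zero (F : V →L[ℂ] V) (μ : ℂ) {m : ℕ} {x : V}
    (hx : ((F - μ • 1) ^ m) x = 0) (t : ℝ) :
    exp (t • F) x = ∑ k ∈ Finset.range m,
      (Complex.exp (t * μ) * (t : ℂ) ^ k / k.factorial) • ((F - μ • 1) ^ k) x := by
  -- `exp_add_of_commute` is stated for normed `ℚ`-algebras
  let _ := NormedAlgebra.restrictScalars ℚ ℂ (V →L[ℂ] V)
  set N := F - μ • 1
  have hsplit : t • F = ((t : ℂ) * μ) • (1 : V →L[ℂ] V) + (t : ℂ) • N := by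
    rw [← smul_one_smul ℂ t F, Complex.real_smul, mul_one, smul_sub, smul_smul]
    abel
  have hscalar : exp (((t : ℂ) * μ) • (1 : V →L[ℂ] V)) = Complex.exp (t * μ) • 1 := by
    rw [← Algebra.algebraMap_eq_smul_one, ← algebraMap_exp_comm, Complex.exp_eq_exp_ℂ,
      Algebra.algebraMap_eq_smul_one]
  have hnil : ∀ k ∉ Finset.range m, ((k.factorial : ℂ)⁻¹ • ((t : ℂ) • N) ^ k) x = 0 := by
    intro k hk
    obtain ⟨j, rfl⟩ := Nat.exists_eq_add_of_le (not_lt.mp (Finset.mem_range.not.mp hk))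
    rw [smul_apply, smul_pow, smul_apply, add_comm m, pow_add N, mul_apply_eq_comp, hx, map_zero,
      smul_zero, smul_zero]
  have hseries := ((exp_series_hasSum_exp' (𝕂 := ℂ) ((t : ℂ) • N)).mapL
    (ContinuousLinearMap.apply ℂ V x)).unique (hasSum_sum_of_ne_finset_zero hnil)
  simp only [ContinuousLinearMap.apply_apply] at hseries
  rw [hsplit, exp_add_of_commute ((Commute.one_left _).smul_left _), hscalar, smul_mul_assoc,
    one_mul, smul_apply, hseries, Finset.smul_sum]
  refine Finset.sum_congr rfl fun k _ => ?_
  simp only [smul_apply, smul_pow, smul_smul]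
  congr 1
  ring

theorem tendsto_exp_smul_apply_of_mem_maxGenEigenspace (F : V →L[ℂ] V) {μ : ℂ} (hμ : μ.re < 0)
    {x : V} (hx : x ∈ maxGenEigenspace (F : V →ₗ[ℂ] V) μ) :
    Tendsto (fun t : ℝ => exp (t • F) x) atTop (𝓝 0) := by
  obtain ⟨m, hm⟩ := (mem_maxGenEigenspace _ _ _).mp hx
  have hm' : ((F - μ • 1) ^ m) x = 0 := by
    rw [← ContinuousLinearMap.coe_coe, ContinuousLinearMap.toLinearMap_pow]
    simpa using hm
  simp_rw [exp_smul_apply_eq_sum_of_pow_apply_eq_zero F μ hm']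
  simpa using tendsto_finsetSum (Finset.range m) fun k _ =>
    ((tendsto_cexp_mul_mul_pow_atTop hμ k).div_const (k.factorial : ℂ)).smul_const
      (((F - μ • 1) ^ k) x)

def attractingSubmodule (F : V →L[ℂ] V) : Submodule ℂ V where
  carrier := {x | Tendsto (fun t : ℝ => exp (t • F) x) atTop (𝓝 0)}
  zero_mem' := by simp
  add_mem' hx hy := by simpa using hx.add hy
  smul_mem' c _ hx := by simpa using hx.const_smul c

theorem stableSubspace_le_attractingSubmodule (F : V →L[ℂ] V) :
    stableSubspace (F : V →ₗ[ℂ] V) ≤ attractingSubmodule F :=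
  iSup₂_le fun _ hμ _ hx => tendsto_exp_smul_apply_of_mem_maxGenEigenspace F hμ hx

theorem exists_forall_norm_exp_smul_apply_le_of_mem_stableSubspace (F : V →L[ℂ] V) {x : V}
    (hx : x ∈ stableSubspace (F : V →ₗ[ℂ] V)) :
    ∃ C : ℝ, ∀ t : ℝ, 0 ≤ t → ‖exp (t • F) x‖ ≤ C :=
  exists_forall_norm_le_of_tendsto
    ((ContinuousLinearMap.apply ℂ V x).continuous.comp
      (differentiable_exp_smul_const ℝ F).continuous)
    (stableSubspace_le_attractingSubmodule F hx)

theorem eq_zero_of_mem_unstableSubspace_of_norm_exp_smul_apply_le [FiniteDimensional ℂ V]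
    (F : V →L[ℂ] V) {w : V} (hw : w ∈ unstableSubspace (F : V →ₗ[ℂ] V)) {C : ℝ}
    (hC : ∀ t : ℝ, 0 ≤ t → ‖exp (t • F) w‖ ≤ C) : w = 0 := by
  set U := unstableSubspace (F : V →ₗ[ℂ] V)
  set G : ℝ → U →L[ℂ] V := fun t => exp (t • -F) ∘L U.subtypeL
  have hG : Tendsto (fun t => ‖G t‖) atTop (𝓝 0) := by
    refine (tendsto_zero_iff_norm_tendsto_zero (f := G)).mp <|
      ContinuousLinearMap.tendsto_nhds_zero_of_tendsto_apply fun z => ?_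
    refine stableSubspace_le_attractingSubmodule (-F) ?_
    rw [ContinuousLinearMap.toLinearMap_neg, stableSubspace_neg]
    exact z.2
  have hinv (t : ℝ) : exp (t • F) w ∈ U :=
    unstableSubspace_le_comap_of_commute
      (((Commute.refl F).smul_right t).exp_right.map ContinuousLinearMap.toLinearMapRingHom) hw
  have hG_apply (t : ℝ) : G t ⟨exp (t • F) w, hinv t⟩ = w := by
    let _ := NormedAlgebra.restrictScalars ℚ ℂ (V →L[ℂ] V)
    have hcomm : Commute (t • -F) (t • F) := ((Commute.refl F).neg_left.smul_left t).smul_right t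
    rw [ContinuousLinearMap.comp_apply, Submodule.subtypeL_apply, ← mul_apply_eq_comp,
      ← exp_add_of_commute hcomm, smul_neg, neg_add_cancel, exp_zero, one_apply_eq_self]
  have hle (t : ℝ) (ht : 0 ≤ t) : ‖w‖ ≤ ‖G t‖ * C :=
    calc ‖w‖ = ‖G t ⟨exp (t • F) w, hinv t⟩‖ := by rw [hG_apply]
      _ ≤ ‖G t‖ * ‖exp (t • F) w‖ := (G t).le_opNorm _
      _ ≤ ‖G t‖ * C := by gcongr; exact hC t ht
  have hlim : Tendsto (fun t => ‖G t‖ * C) atTop (𝓝 0) := by simpa using hG.mul_const C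
  exact norm_le_zero_iff.mp (ge_of_tendsto hlim (eventually_atTop.mpr ⟨0, hle⟩))

theorem exists_forall_norm_exp_smul_apply_le_iff_mem_stableSubspace [FiniteDimensional ℂ V]
    (F : V →L[ℂ] V) (h : ∀ μ, HasEigenvalue (F : V →ₗ[ℂ] V) μ → μ.re ≠ 0) (x : V) :
    (∃ C : ℝ, ∀ t : ℝ, 0 ≤ t → ‖exp (t • F) x‖ ≤ C) ↔ x ∈ stableSubspace (F : V →ₗ[ℂ] V) := by
  refine ⟨fun ⟨C, hC⟩ => ?_, exists_forall_norm_exp_smul_apply_le_of_mem_stableSubspace F⟩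
  obtain ⟨s, hs, w, hw, rfl⟩ := Submodule.mem_sup.mp
    ((stableSubspace_sup_unstableSubspace h).symm ▸ Submodule.mem_top (x := x))
  obtain ⟨Cs, hCs⟩ := exists_forall_norm_exp_smul_apply_le_of_mem_stableSubspace F hs
  have hw0 : w = 0 := by
    refine eq_zero_of_mem_unstableSubspace_of_norm_exp_smul_apply_le F hw (C := C + Cs)
      fun t ht => ?_
    calc ‖exp (t • F) w‖ = ‖exp (t • F) (s + w) - exp (t • F) s‖ := by
          rw [map_add, add_sub_cancel_left]
      _ ≤ C + Cs := (norm_sub_le _ _).trans (add_le_add (hC t ht) (hCs t ht))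
  rwa [hw0, add_zero]

theorem eq_exp_smul_apply_of_hasDerivAt (F : V →L[ℂ] V) {u : ℝ → V}
    (hu : ∀ t : ℝ, 0 ≤ t → HasDerivAt u (F (u t)) t) {t : ℝ} (ht : 0 ≤ t) :
    u t = exp (t • F) (u 0) := by
  have hexp (s : ℝ) : HasDerivAt (fun s : ℝ => exp (s • F) (u 0)) (F (exp (s • F) (u 0))) s := by
    simpa [Function.comp_def] using
      ((ContinuousLinearMap.apply ℂ V (u 0)).restrictScalars ℝ).hasFDerivAt.comp_hasDerivAt s
        (hasDerivAt_exp_smul_const' F s)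
  exact ODE_solution_unique (v := fun _ => F) (K := ‖F‖₊) (fun _ => F.lipschitz)
    (fun s hs => (hu s hs.1).continuousAt.continuousWithinAt)
    (fun s hs => (hu s hs.1).hasDerivWithinAt)
    (fun s _ => (hexp s).continuousAt.continuousWithinAt)
    (fun s _ => (hexp s).hasDerivWithinAt) (by simp) ⟨ht, le_rfl⟩

end Flow

/-- For a matrix `A` with no purely imaginary eigenvalues, a solution of
`u' = A u` on `[0, ∞)` is bounded iff `u 0` lies in the sum of the generalized
eigenspaces for eigenvalues with negative real part. -/
theorem bounded_solution_iff_initial_in_negative_spectral_subspace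
    (n : ℕ) (A : Matrix (Fin n) (Fin n) ℂ)
    (h : ∀ μ : ℂ, Module.End.HasEigenvalue (Matrix.mulVecLin A) μ → μ.re ≠ 0)
    (u : ℝ → (Fin n → ℂ))
    (hu : ∀ t : ℝ, 0 ≤ t → HasDerivAt u (A.mulVec (u t)) t) :
    (∃ C : ℝ, ∀ t : ℝ, 0 ≤ t → ‖u t‖ ≤ C) ↔
      u 0 ∈ ⨆ μ ∈ {μ : ℂ | μ.re < 0},
        LinearMap.ker (((Matrix.mulVecLin A : Module.End ℂ (Fin n → ℂ)) - μ • 1) ^ n) := by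
  set F := LinearMap.toContinuousLinearMap (Matrix.mulVecLin A)
  have hker (μ : ℂ) : LinearMap.ker ((Matrix.mulVecLin A - μ • 1) ^ n) =
      Module.End.maxGenEigenspace (Matrix.mulVecLin A) μ := by
    rw [Module.End.maxGenEigenspace_eq_genEigenspace_finrank, Module.finrank_fin_fun,
      Module.End.genEigenspace_nat]
  simp_rw [hker]
  refine Iff.trans ?_ (exists_forall_norm_exp_smul_apply_le_iff_mem_stableSubspace F h (u 0))
  refine exists_congr fun C => forall₂_congr fun t ht => ?_
  rw [eq_exp_smul_apply_of_hasDerivAt F hu ht]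
end

section
/- Let H be a Hilbert space and let P, Q be bounded idempotent operators on H with P Q = 0 and Q P = 0. Suppose B is a bounded operator with B = Q B P (B maps range P into range Q) and C is a bounded operator with C = P C Q, such that B C = Q and C B = P (B restricts to an isomorphism range P → range Q with inverse C). Then for every φ ∈ [0, π/2] the operator P_φ = (cos²φ) P + (sin²φ) Q + (cos φ sin φ)(B P + C Q) is an idempotent, with P_0 = P and P_{π/2} = Q; moreover φ ↦ P_φ is norm continuous. -/
set_option maxHeartbeats 1000000 in
set_option synthInstance.maxHeartbeats 400000 in
/-- The rotation homotopy
`P_φ = cos²φ · P + sin²φ · Q + cosφ sinφ · (BP + CQ)` consists of idempotents,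
connects `P` to `Q`, and is norm continuous. -/
theorem rotation_homotopy_idempotent {H : Type*} [NormedAddCommGroup H]
    [InnerProductSpace ℂ H] [CompleteSpace H]
    (P Q B C : H →L[ℂ] H)
    (hP : P ∘L P = P) (hQ : Q ∘L Q = Q)
    (hPQ : P ∘L Q = 0) (hQP : Q ∘L P = 0)
    (hB : B = Q ∘L B ∘L P) (hC : C = P ∘L C ∘L Q)
    (hBC : B ∘L C = Q) (hCB : C ∘L B = P)
    (Pfun : ℝ → H →L[ℂ] H)
    (hPfun : ∀ φ : ℝ, Pfun φ =
      (Real.cos φ) ^ 2 • P + (Real.sin φ) ^ 2 • Q +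
        (Real.cos φ * Real.sin φ) • (B ∘L P + C ∘L Q)) :
    (∀ φ ∈ Set.Icc (0 : ℝ) (Real.pi / 2), Pfun φ ∘L Pfun φ = Pfun φ) ∧
      Pfun 0 = P ∧ Pfun (Real.pi / 2) = Q ∧ Continuous Pfun := by
  simp only [← ContinuousLinearMap.mul_def] at hP hQ hPQ hQP hB hC hBC hCB hPfun ⊢
  have hBP : B * P = B := by
    nth_rewrite 1 [hB]; rw [mul_assoc, mul_assoc, hP, ← hB]
  have hQB : Q * B = B := by
    nth_rewrite 1 [hB]; rw [← mul_assoc, hQ, ← hB]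
  have hPB : P * B = 0 := by
    nth_rewrite 1 [hB]; rw [← mul_assoc, hPQ, zero_mul]
  have hBQ : B * Q = 0 := by
    nth_rewrite 1 [hB]; rw [mul_assoc, mul_assoc, hPQ, mul_zero, mul_zero]
  have hCQ : C * Q = C := by
    nth_rewrite 1 [hC]; rw [mul_assoc, mul_assoc, hQ, ← hC]
  have hPC : P * C = C := by
    nth_rewrite 1 [hC]; rw [← mul_assoc, hP, ← hC]
  have hQC : Q * C = 0 := by
    nth_rewrite 1 [hC]; rw [← mul_assoc, hQP, zero_mul]
  have hCP : C * P = 0 := by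
    nth_rewrite 1 [hC]; rw [mul_assoc, mul_assoc, hQP, mul_zero, mul_zero]
  have hBB : B * B = 0 := by
    nth_rewrite 2 [hB]; rw [← mul_assoc, ← mul_assoc, hBQ, zero_mul, zero_mul]
  have hCC : C * C = 0 := by
    nth_rewrite 2 [hC]; rw [← mul_assoc, ← mul_assoc, hCP, zero_mul, zero_mul]
  refine ⟨?_, ?_, ?_, ?_⟩
  · intro φ _
    rw [hPfun φ, hBP, hCQ]
    simp only [mul_add, add_mul, smul_mul_assoc, mul_smul_comm, hP, hQ, hPQ, hQP,
      hPB, hPC, hQB, hQC, hBP, hBQ, hCP, hCQ, hBB, hCC, hBC, hCB, smul_smul,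
      smul_zero, add_zero, zero_add]
    match_scalars <;> (first
      | linear_combination (Real.cos φ^2 - Real.cos φ * Real.sin φ) * Real.sin_sq_add_cos_sq φ
      | linear_combination (Real.sin φ^2 - Real.cos φ * Real.sin φ) * Real.sin_sq_add_cos_sq φ
      | linear_combination (Real.cos φ * Real.sin φ) * Real.sin_sq_add_cos_sq φ
      | linear_combination (Real.cos φ^2) * Real.sin_sq_add_cos_sq φ
      | linear_combination (Real.sin φ^2) * Real.sin_sq_add_cos_sq φ)
  · rw [hPfun]; simp
  · rw [hPfun]; simp [Real.cos_pi_div_two, Real.sin_pi_div_two]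
  · have : Pfun = fun φ => (Real.cos φ) ^ 2 • P + (Real.sin φ) ^ 2 • Q +
        (Real.cos φ * Real.sin φ) • (B * P + C * Q) := funext hPfun
    rw [this]
    fun_prop
end

section
/- Let P₁ and P₂ be bounded projections (idempotents) on a Hilbert space H whose difference P₁ - P₂ is a compact operator. Then the operator P₂ restricted to a map from the range of P₁ (a closed subspace) to the range of P₂ is a Fredholm operator. -/
/-- A linear map between normed `ℂ`-vector spaces is Fredholm if it has
finite-dimensional kernel, finite-dimensional cokernel, and closed range. -/
def IsFredholm {E F : Type*} [NormedAddCommGroup E] [Module ℂ E]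
    [NormedAddCommGroup F] [Module ℂ F] (T : E →ₗ[ℂ] F) : Prop :=
  FiniteDimensional ℂ (LinearMap.ker T) ∧
    FiniteDimensional ℂ (F ⧸ LinearMap.range T) ∧
    IsClosed ((LinearMap.range T : Submodule ℂ F) : Set F)

/-- The Fredholm index: `dim ker T - dim coker T`. -/
noncomputable def fredIndex {E F : Type*} [NormedAddCommGroup E] [Module ℂ E]
    [NormedAddCommGroup F] [Module ℂ F] (T : E →ₗ[ℂ] F) : ℤ :=
  (Module.finrank ℂ (LinearMap.ker T) : ℤ) -
    (Module.finrank ℂ (F ⧸ LinearMap.range T) : ℤ)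

/-- The operator `Q : range P → range Q` obtained by restricting `Q`. -/
noncomputable def restrictToRanges {H : Type*} [NormedAddCommGroup H]
    [InnerProductSpace ℂ H] (P Q : H →L[ℂ] H) :
    LinearMap.range (P : H →ₗ[ℂ] H) →ₗ[ℂ] LinearMap.range (Q : H →ₗ[ℂ] H) :=
  (Q : H →ₗ[ℂ] H).restrict (fun x _ => LinearMap.mem_range_self _ x)

/-- The relative index `ind(P, Q)` of two projections. -/
noncomputable def relIndex {H : Type*} [NormedAddCommGroup H]
    [InnerProductSpace ℂ H] (P Q : H →L[ℂ] H) : ℤ :=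
  fredIndex (restrictToRanges P Q)

/-! Restricting to ranges is invertible modulo compact operators: on `range P` one has
`P Q - 1 = P (Q - P)`, so `P₁ : range P₂ → range P₁` inverts `P₂ : range P₁ → range P₂` up to
compacts on both sides. Such an operator `f` between Hilbert spaces is Fredholm. A left inverse `g`
modulo a compact `K` gives `‖x‖ ≤ ‖g‖ ‖f x‖ + ‖K x‖`: on the kernel this makes a compact operator
bounded below, so the kernel is finite-dimensional (Riesz), and on the orthogonal complement of the
kernel the same bound and a convergent-subsequence argument make `f` bounded below, so its range is
closed. A right inverse with `f g = 1 + K'` gives `‖w‖ ≤ ‖K' w‖` for every `w ⊥ range f`, so the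
cokernel is finite-dimensional as well. -/

open Filter Topology Metric
open scoped NNReal

section NormedSpace

variable {𝕜 E F G : Type*} [NontriviallyNormedField 𝕜] [CompleteSpace 𝕜]
  [NormedAddCommGroup E] [NormedSpace 𝕜 E] [CompleteSpace E]
  [NormedAddCommGroup F] [NormedSpace 𝕜 F]

theorem FiniteDimensional.of_isCompactOperator_of_antilipschitz {C : E →L[𝕜] F} {K : ℝ≥0}
    (hC : IsCompactOperator C) (hK : AntilipschitzWith K C) : FiniteDimensional 𝕜 E := by
  obtain ⟨L, hL, hball⟩ := hC.image_closedBall_subset_compact 1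
  have hpre : IsCompact (C ⁻¹' L) :=
    (hK.isClosedEmbedding C.uniformContinuous).isCompact_preimage hL
  exact .of_isCompact_closedBall₀ 𝕜 one_pos
    (hpre.of_isClosed_subset isClosed_closedBall (Set.image_subset_iff.1 hball))

theorem Submodule.finiteDimensional_of_isCompactOperator_of_norm_le {S : Submodule 𝕜 E}
    (hS : IsClosed (S : Set E)) {C : E →L[𝕜] F} (hC : IsCompactOperator C)
    (hle : ∀ x ∈ S, ‖x‖ ≤ ‖C x‖) : FiniteDimensional 𝕜 S :=
  have := hS.completeSpace_coe
  .of_isCompactOperator_of_antilipschitz (hC.comp_clm S.subtypeL)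
    ((C ∘L S.subtypeL).antilipschitz_of_bound (K := 1) fun x => by simpa using hle x x.2)

variable [NormedAddCommGroup G] [NormedSpace 𝕜 G]

theorem ContinuousLinearMap.finiteDimensional_ker_of_norm_le_add_compact {f : E →L[𝕜] F}
    {C : E →L[𝕜] G} (hC : IsCompactOperator C) {a : ℝ} (hle : ∀ x, ‖x‖ ≤ a * ‖f x‖ + ‖C x‖) :
    FiniteDimensional 𝕜 (LinearMap.ker (f : E →ₗ[𝕜] F)) :=
  Submodule.finiteDimensional_of_isCompactOperator_of_norm_le f.isClosed_ker hC
    fun x (hx : f x = 0) => by simpa [hx] using hle x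

end NormedSpace

section RCLike

variable {𝕜 E F G : Type*} [RCLike 𝕜] [NormedAddCommGroup E] [NormedSpace 𝕜 E]
  [NormedAddCommGroup F] [NormedSpace 𝕜 F] [NormedAddCommGroup G] [NormedSpace 𝕜 G]

theorem ContinuousLinearMap.exists_seq_norm_eq_one_tendsto_zero {f : E →L[𝕜] F}
    (hf : ¬ ∃ c > 0, ∀ x, c * ‖x‖ ≤ ‖f x‖) :
    ∃ u : ℕ → E, (∀ n, ‖u n‖ = 1) ∧ Tendsto (fun n => f (u n)) atTop (𝓝 0) := by
  push Not at hf
  choose x hx using fun n : ℕ => hf (1 / (n + 1)) (by positivity)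
  have hx0 : ∀ n, x n ≠ 0 := fun n h => by simpa [h] using hx n
  refine ⟨fun n => (‖x n‖⁻¹ : 𝕜) • x n, fun n => norm_smul_inv_norm (hx0 n), ?_⟩
  refine squeeze_zero_norm (fun n => ?_) tendsto_one_div_add_atTop_nhds_zero_nat
  rw [map_smul, norm_smul, norm_inv, RCLike.norm_ofReal, abs_norm]
  exact (inv_mul_le_iff₀ (norm_pos_iff.2 (hx0 n))).2 ((hx n).le.trans_eq (mul_comm _ _))

theorem ContinuousLinearMap.exists_antilipschitz_of_norm_le_add_compact [CompleteSpace E]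
    {f : E →L[𝕜] F} (hf : Function.Injective f) {C : E →L[𝕜] G} (hC : IsCompactOperator C)
    {a : ℝ} (hle : ∀ x, ‖x‖ ≤ a * ‖f x‖ + ‖C x‖) : ∃ K, AntilipschitzWith K f := by
  rw [antilipschitzWith_iff_exists_mul_le_norm]
  by_contra hbelow
  obtain ⟨u, hu, hfu⟩ := f.exists_seq_norm_eq_one_tendsto_zero hbelow
  obtain ⟨L, hL, hball⟩ := hC.image_closedBall_subset_compact 1
  obtain ⟨y, -, φ, hφ, hCu⟩ :=
    hL.tendsto_subseq (x := fun n => C (u n)) fun n => hball ⟨u n, by simp [hu], rfl⟩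
  -- the bound makes `x ↦ (f x, C x)` a closed embedding, so `u ∘ φ` converges along with it
  set Φ := f.prod C
  have hΦ : AntilipschitzWith (‖a‖₊ + 1) Φ := Φ.antilipschitz_of_bound fun x => by
    have h1 : ‖f x‖ ≤ ‖Φ x‖ := _root_.norm_fst_le (Φ x)
    have h2 : ‖C x‖ ≤ ‖Φ x‖ := _root_.norm_snd_le (Φ x)
    have := hle x
    simp only [NNReal.coe_add, coe_nnnorm, Real.norm_eq_abs, NNReal.coe_one]
    nlinarith [le_abs_self a, abs_nonneg a, norm_nonneg (f x)]
  have hΦu : Tendsto (fun n => Φ (u (φ n))) atTop (𝓝 (0, y)) :=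
    (hfu.comp hφ.tendsto_atTop).prodMk_nhds hCu
  obtain ⟨z, hz⟩ : (0, y) ∈ Set.range Φ :=
    (hΦ.isClosed_range Φ.uniformContinuous).mem_of_tendsto hΦu (.of_forall fun n => ⟨_, rfl⟩)
  have huz : Tendsto (fun n => u (φ n)) atTop (𝓝 z) :=
    (hΦ.isClosedEmbedding Φ.uniformContinuous).isInducing.tendsto_nhds_iff.2 (hz ▸ hΦu)
  have hz0 : z = 0 := hf (by simpa [Φ] using congrArg Prod.fst hz)
  have hz1 : ‖z‖ = 1 := tendsto_nhds_unique huz.norm (by simp [hu])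
  simp [hz0] at hz1

end RCLike

section InnerProductSpace

variable {𝕜 E F G : Type*} [RCLike 𝕜] [NormedAddCommGroup E] [NormedAddCommGroup F]

theorem Submodule.norm_le_norm_sub_of_mem_orthogonal [InnerProductSpace 𝕜 F]
    {K : Submodule 𝕜 F} {w y : F} (hw : w ∈ Kᗮ) (hy : y ∈ K) : ‖w‖ ≤ ‖y - w‖ := by
  have hyw : inner 𝕜 y w = 0 := K.inner_right_of_mem_orthogonal hy hw
  have := norm_sub_sq (𝕜 := 𝕜) y w
  rw [hyw, map_zero, mul_zero, sub_zero] at this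
  nlinarith [norm_nonneg w, norm_nonneg (y - w), sq_nonneg ‖y‖]

theorem ContinuousLinearMap.finiteDimensional_quotient_range_of_isCompactOperator_comp_sub_one
    [NormedSpace 𝕜 E] [InnerProductSpace 𝕜 F] [CompleteSpace F] {f : E →L[𝕜] F}
    (hf : IsClosed (LinearMap.range (f : E →ₗ[𝕜] F) : Set F)) {g : F →L[𝕜] E}
    (hfg : IsCompactOperator ⇑(f ∘L g - 1)) :
    FiniteDimensional 𝕜 (F ⧸ LinearMap.range (f : E →ₗ[𝕜] F)) := by
  set R := LinearMap.range (f : E →ₗ[𝕜] F)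
  have : CompleteSpace R := hf.completeSpace_coe
  have : FiniteDimensional 𝕜 Rᗮ := Submodule.finiteDimensional_of_isCompactOperator_of_norm_le
    (Submodule.isClosed_orthogonal R) hfg fun w hw => by
      simpa using Submodule.norm_le_norm_sub_of_mem_orthogonal hw
        (LinearMap.mem_range_self (f : E →ₗ[𝕜] F) (g w))
  exact (R.quotientEquivOfIsCompl Rᗮ R.isCompl_orthogonal).symm.finiteDimensional

theorem ContinuousLinearMap.isClosed_range_of_norm_le_add_compact [InnerProductSpace 𝕜 E]
    [CompleteSpace E] [NormedSpace 𝕜 F] [NormedAddCommGroup G] [NormedSpace 𝕜 G]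
    {f : E →L[𝕜] F} {C : E →L[𝕜] G} (hC : IsCompactOperator C) {a : ℝ}
    (hle : ∀ x, ‖x‖ ≤ a * ‖f x‖ + ‖C x‖) :
    IsClosed (LinearMap.range (f : E →ₗ[𝕜] F) : Set F) := by
  set N := LinearMap.ker (f : E →ₗ[𝕜] F)
  have : CompleteSpace N := f.isClosed_ker.completeSpace_coe
  set g := f ∘L Nᗮ.subtypeL
  have hg : Function.Injective g := (injective_iff_map_eq_zero g).2 fun v hv =>
    Subtype.ext (N.inf_orthogonal_eq_bot.le ⟨hv, v.2⟩)
  obtain ⟨K, hK⟩ := g.exists_antilipschitz_of_norm_le_add_compact hg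
    (C := C ∘L Nᗮ.subtypeL) (hC.comp_clm Nᗮ.subtypeL) (a := a) fun v => hle v
  have hrange : Set.range g = LinearMap.range (f : E →ₗ[𝕜] F) := by
    refine subset_antisymm (Set.range_subset_iff.2 fun v =>
      LinearMap.mem_range_self (f : E →ₗ[𝕜] F) v) ?_
    rintro _ ⟨x, rfl⟩
    obtain ⟨k, hk, v, hv, rfl⟩ := Submodule.mem_sup.1
      (N.sup_orthogonal_of_hasOrthogonalProjection ▸ Submodule.mem_top (x := x))
    exact ⟨⟨v, hv⟩, by simp [g, show f k = 0 from hk]⟩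
  exact hrange ▸ hK.isClosed_range g.uniformContinuous

end InnerProductSpace

theorem isFredholm_of_isCompactOperator_comp_sub_one {E F : Type*} [NormedAddCommGroup E]
    [InnerProductSpace ℂ E] [CompleteSpace E] [NormedAddCommGroup F] [InnerProductSpace ℂ F]
    [CompleteSpace F] {f : E →L[ℂ] F} {g : F →L[ℂ] E} (hgf : IsCompactOperator ⇑(g ∘L f - 1))
    (hfg : IsCompactOperator ⇑(f ∘L g - 1)) : IsFredholm (f : E →ₗ[ℂ] F) := by
  have hle : ∀ x, ‖x‖ ≤ ‖g‖ * ‖f x‖ + ‖(g ∘L f - 1) x‖ := fun x =>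
    calc ‖x‖ = ‖g (f x) - (g ∘L f - 1) x‖ := by simp
      _ ≤ ‖g (f x)‖ + ‖(g ∘L f - 1) x‖ := norm_sub_le _ _
      _ ≤ ‖g‖ * ‖f x‖ + ‖(g ∘L f - 1) x‖ := by gcongr; exact g.le_opNorm _
  have hclosed := f.isClosed_range_of_norm_le_add_compact hgf hle
  exact ⟨f.finiteDimensional_ker_of_norm_le_add_compact hgf hle,
    f.finiteDimensional_quotient_range_of_isCompactOperator_comp_sub_one hclosed hfg, hclosed⟩

section Projections

variable {H : Type*} [NormedAddCommGroup H] [InnerProductSpace ℂ H]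

noncomputable def restrictToRangesL (P Q : H →L[ℂ] H) :
    LinearMap.range (P : H →ₗ[ℂ] H) →L[ℂ] LinearMap.range (Q : H →ₗ[ℂ] H) :=
  (Q ∘L (LinearMap.range (P : H →ₗ[ℂ] H)).subtypeL).codRestrict _ fun _ =>
    LinearMap.mem_range_self (Q : H →ₗ[ℂ] H) _

theorem isCompactOperator_restrictToRangesL_comp_sub_one {P Q : H →L[ℂ] H}
    (hP : IsIdempotentElem P) (hQP : IsCompactOperator (Q - P)) :
    IsCompactOperator ⇑(restrictToRangesL Q P ∘L restrictToRangesL P Q - 1) := by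
  set M := LinearMap.range (P : H →ₗ[ℂ] H)
  have hmaps : ∀ x : M, (P ∘L (Q - P) ∘L M.subtypeL) x ∈ M := fun x =>
    LinearMap.mem_range_self (P : H →ₗ[ℂ] H) _
  have heq : restrictToRangesL Q P ∘L restrictToRangesL P Q - 1 =
      (P ∘L (Q - P) ∘L M.subtypeL).codRestrict M hmaps := by
    ext x
    have hx : P x = x := LinearMap.IsIdempotentElem.mem_range_iff
      (ContinuousLinearMap.IsIdempotentElem.toLinearMap hP) |>.1 x.2
    change P (Q x) - x = P ((Q - P) x)
    simp [hx]
  rw [heq]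
  exact ((hQP.clm_comp P).comp_clm M.subtypeL).codRestrict hmaps
    (ContinuousLinearMap.IsIdempotentElem.isClosed_range hP)

end Projections

/-- If `P₁, P₂` are bounded idempotents with compact difference, then
`P₂ : range P₁ → range P₂` is Fredholm. -/
theorem restriction_is_fredholm_of_compact_difference {H : Type*}
    [NormedAddCommGroup H] [InnerProductSpace ℂ H] [CompleteSpace H]
    (P₁ P₂ : H →L[ℂ] H) (h1 : P₁ ∘L P₁ = P₁) (h2 : P₂ ∘L P₂ = P₂)
    (hcpt : IsCompactOperator ⇑(P₁ - P₂)) :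
    IsFredholm (restrictToRanges P₁ P₂) := by
  have := (ContinuousLinearMap.IsIdempotentElem.isClosed_range h1).completeSpace_coe
  have := (ContinuousLinearMap.IsIdempotentElem.isClosed_range h2).completeSpace_coe
  have hcpt' : IsCompactOperator ⇑(P₂ - P₁) := by simpa using hcpt.neg
  exact isFredholm_of_isCompactOperator_comp_sub_one (f := restrictToRangesL P₁ P₂)
    (isCompactOperator_restrictToRangesL_comp_sub_one h1 hcpt')
    (isCompactOperator_restrictToRangesL_comp_sub_one h2 hcpt)
end
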